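/- arXiv:2409.09803 — 2 statements merged into one kernel-verified Lean document; each statement's English description precedes it below -/
import Mathlib

section
/- Let $C_0 > 0$ and let $(\xi_n)$ be a real sequence with $\xi_n \to 0$ satisfying, for all sufficiently large $n$ (say all $n$ with $1/2 \le 1+\xi_n \le 2$ and $C_0/n < 1$), the recursion $\xi_{n+1} - \xi_n = -\xi_n^2/(1+\xi_n) + f_n$ where $|f_n| \le C_0/n^2$. Then $\xi_n = O(1/n)$ as $n \to \infty$. -/
open Filter

set_option maxHeartbeats 1600000

/-- Discrete dynamics lemma: a sequence tending to 0 satisfying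
`ξ_{n+1} - ξ_n = -ξ_n²/(1+ξ_n) + f_n` with `|f_n| ≤ C₀/n²` is `O(1/n)`. -/
theorem stmt_0 (C₀ : ℝ) (hC₀ : 0 < C₀) (ξ f : ℕ → ℝ)
    (hξ : Tendsto ξ atTop (nhds 0))
    (hf : ∀ n : ℕ, 1 ≤ n → |f n| ≤ C₀ / (n : ℝ) ^ 2)
    (hrec : ∀ n : ℕ, 1 / 2 ≤ 1 + ξ n → 1 + ξ n ≤ 2 → C₀ / (n : ℝ) < 1 →
      ξ (n + 1) - ξ n = -(ξ n) ^ 2 / (1 + ξ n) + f n) :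
    ∃ C : ℝ, 0 < C ∧ ∀ n : ℕ, 1 ≤ n → |ξ n| ≤ C / (n : ℝ) := by
  obtain ⟨N₀, hN₀⟩ := Metric.tendsto_atTop.mp hξ (1/4) (by norm_num)
  set N : ℕ := max N₀ (⌈C₀⌉₊ + 2) with hNdef
  have hN2 : 2 ≤ N := le_trans (by omega) (le_max_right _ _)
  have hNpos : (0:ℝ) < N := by exact_mod_cast (by omega : 0 < N)
  have hNC₀ : C₀ < N := by
    have h1 : C₀ ≤ (⌈C₀⌉₊ : ℝ) := Nat.le_ceil C₀
    have h2 : (⌈C₀⌉₊ + 2 : ℕ) ≤ N := le_max_right _ _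
    have h3 : ((⌈C₀⌉₊ + 2 : ℕ) : ℝ) ≤ N := Nat.cast_le.mpr h2
    push_cast at h3
    linarith
  have hsmall : ∀ n, N ≤ n → |ξ n| ≤ 1/4 := by
    intro n hn
    have := hN₀ n (le_trans (le_max_left _ _) hn)
    rw [Real.dist_eq, sub_zero] at this
    linarith
  clear hNdef hN₀
  clear_value N
  -- usable recursion
  have hrec' : ∀ n, N ≤ n → ξ (n+1) = ξ n / (1 + ξ n) + f n := by
    intro n hn
    have hs := abs_le.mp (hsmall n hn)
    have hncast : (N:ℝ) ≤ n := Nat.cast_le.mpr hn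
    have hnpos : (0:ℝ) < n := lt_of_lt_of_le hNpos hncast
    have h3 : C₀ / (n:ℝ) < 1 := by
      rw [div_lt_one hnpos]; linarith
    have heq := hrec n (by linarith [hs.1]) (by linarith [hs.2]) h3
    have hne : (1 + ξ n) ≠ 0 := ne_of_gt (by linarith [hs.1])
    have key : ξ n + -(ξ n)^2/(1+ξ n) = ξ n/(1+ξ n) := by
      field_simp
      ring
    linarith [heq, key]
  -- upper bound constant
  set C₂ : ℝ := max (max (6*C₀) 2) ((N:ℝ)/4) with hC₂def
  have hC₂6 : 6*C₀ ≤ C₂ := le_trans (le_max_left _ _) (le_max_left _ _)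
  have hC₂2 : (2:ℝ) ≤ C₂ := le_trans (le_max_right _ _) (le_max_left _ _)
  have hC₂N : (N:ℝ)/4 ≤ C₂ := le_max_right _ _
  have hC₂pos : (0:ℝ) < C₂ := by linarith
  clear hC₂def
  clear_value C₂
  -- upper bound
  have hup : ∀ n, N ≤ n → ξ n ≤ C₂ / n := by
    intro n hn
    induction n, hn using Nat.le_induction with
    | base =>
      have hs := abs_le.mp (hsmall N le_rfl)
      rw [le_div_iff₀ hNpos]
      nlinarith [hs.2]
    | succ n hn ih =>
      have hncast : (N:ℝ) ≤ n := Nat.cast_le.mpr hn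
      have hnpos : (0:ℝ) < n := lt_of_lt_of_le hNpos hncast
      have hn2 : (2:ℝ) ≤ n := le_trans (by exact_mod_cast Nat.cast_le.mpr hN2) hncast
      have hs := abs_le.mp (hsmall n hn)
      have h1x : (0:ℝ) < 1 + ξ n := by linarith [hs.1]
      have heq := hrec' n hn
      have hmuln : ξ n * n ≤ C₂ := by
        have := ih
        rw [le_div_iff₀ hnpos] at this
        linarith
      have hstep1 : ξ n / (1 + ξ n) ≤ C₂ / (n + C₂) := by
        rw [div_le_div_iff₀ h1x (by linarith)]
        nlinarith
      have hn1 : 1 ≤ n := by omega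
      have hfb : f n ≤ C₀ / (n:ℝ)^2 := (abs_le.mp (hf n hn1)).2
      have hfinal : C₂/((n:ℝ)+C₂) + C₀/(n:ℝ)^2 ≤ C₂/((n:ℝ)+1) := by
        have hA : ((n:ℝ)+C₂)*((n:ℝ)+1) ≤ 6*(C₂-1)*(n:ℝ)^2 := by
          nlinarith [mul_nonneg (by linarith : (0:ℝ) ≤ (n:ℝ)-2) (by linarith : (0:ℝ) ≤ C₂-2),
            mul_nonneg (by linarith : (0:ℝ) ≤ C₂-2) (sq_nonneg (n:ℝ)), sq_nonneg ((n:ℝ)-2)]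
        have hB : C₀*(6*(C₂-1)*(n:ℝ)^2) ≤ C₂*((C₂-1)*(n:ℝ)^2) := by
          have h1 : (0:ℝ) ≤ (C₂-1)*(n:ℝ)^2 := mul_nonneg (by linarith) (sq_nonneg _)
          nlinarith [mul_nonneg (by linarith : (0:ℝ) ≤ C₂ - 6*C₀) h1]
        have key2 : C₀*(((n:ℝ)+C₂)*((n:ℝ)+1)) ≤ C₂*((C₂-1)*(n:ℝ)^2) := by
          refine le_trans ?_ hB
          exact mul_le_mul_of_nonneg_left hA hC₀.le
        have hd1 : (0:ℝ) < (n:ℝ)+C₂ := by linarith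
        have hd2 : (0:ℝ) < (n:ℝ)^2 := by positivity
        have hd3 : (0:ℝ) < ((n:ℝ)+C₂)*(n:ℝ)^2 := mul_pos hd1 hd2
        have hd4 : (0:ℝ) < (n:ℝ)+1 := by linarith
        have expand : C₂ * (((n:ℝ)+C₂)*(n:ℝ)^2) - (C₂ * (n:ℝ)^2 + ((n:ℝ)+C₂)*C₀) * ((n:ℝ)+1)
            = C₂*((C₂-1)*(n:ℝ)^2) - C₀*(((n:ℝ)+C₂)*((n:ℝ)+1)) := by ring
        rw [div_add_div _ _ hd1.ne' hd2.ne', div_le_div_iff₀ hd3 hd4]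
        linarith [key2, expand]
      push_cast
      linarith
  -- lower bound
  have hlow : ∀ n, N ≤ n → -(2*C₀) / n ≤ ξ n := by
    intro n hn
    have hncast : (N:ℝ) ≤ n := Nat.cast_le.mpr hn
    have hnpos : (0:ℝ) < n := lt_of_lt_of_le hNpos hncast
    have key : ∀ m, n ≤ m → ξ m + 2*C₀/m ≤ ξ n + 2*C₀/n := by
      intro m hm
      induction m, hm using Nat.le_induction with
      | base => exact le_refl _
      | succ m hm ih =>
        have hNm : N ≤ m := le_trans hn hm
        have hmcast : (N:ℝ) ≤ m := Nat.cast_le.mpr hNm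
        have hmpos : (0:ℝ) < m := lt_of_lt_of_le hNpos hmcast
        have hm1 : 1 ≤ m := by omega
        have hs := abs_le.mp (hsmall m hNm)
        have h1x : (0:ℝ) < 1 + ξ m := by linarith [hs.1]
        have heq := hrec' m hNm
        have hmono : ξ m / (1 + ξ m) ≤ ξ m := by
          rw [div_le_iff₀ h1x]
          nlinarith [sq_nonneg (ξ m)]
        have hfb : f m ≤ C₀ / (m:ℝ)^2 := (abs_le.mp (hf m hm1)).2
        have hsum : 2*C₀/((m:ℝ)+1) + C₀/(m:ℝ)^2 ≤ 2*C₀/(m:ℝ) := by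
          have hm1' : (1:ℝ) ≤ m := by exact_mod_cast hm1
          have hd1 : (0:ℝ) < (m:ℝ)+1 := by linarith
          have hd2 : (0:ℝ) < (m:ℝ)^2 := by positivity
          have hd3 : (0:ℝ) < ((m:ℝ)+1)*(m:ℝ)^2 := mul_pos hd1 hd2
          rw [div_add_div _ _ hd1.ne' hd2.ne', div_le_div_iff₀ hd3 hmpos]
          nlinarith [mul_nonneg hC₀.le (mul_nonneg hmpos.le (by linarith : (0:ℝ) ≤ (m:ℝ)-1))]
        push_cast
        push_cast at ih
        linarith
    have hlim : Tendsto (fun m : ℕ => ξ m + 2*C₀/(m:ℝ)) atTop (nhds 0) := by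
      have h2 : Tendsto (fun m : ℕ => 2*C₀/(m:ℝ)) atTop (nhds 0) :=
        tendsto_const_div_atTop_nhds_zero_nat (2*C₀)
      simpa using hξ.add h2
    have h0 : (0:ℝ) ≤ ξ n + 2*C₀/n :=
      le_of_tendsto hlim (eventually_atTop.mpr ⟨n, key⟩)
    have : -(2*C₀)/(n:ℝ) = -(2*C₀/(n:ℝ)) := by ring
    rw [this]
    linarith
  -- finite part
  set Cf : ℝ := ∑ k ∈ Finset.range N, (N:ℝ) * |ξ k| with hCfdef
  have hCfn : ∀ n, 1 ≤ n → n < N → |ξ n| ≤ Cf / n := by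
    intro n h1 h2
    have hnpos : (0:ℝ) < n := by exact_mod_cast h1
    have hterm : (N:ℝ) * |ξ n| ≤ Cf :=
      Finset.single_le_sum (f := fun k => (N:ℝ) * |ξ k|)
        (fun k _ => by positivity) (Finset.mem_range.mpr h2)
    rw [le_div_iff₀ hnpos]
    have hcast : (n:ℝ) ≤ N := by exact_mod_cast le_of_lt h2
    nlinarith [abs_nonneg (ξ n)]
  have hCf0 : 0 ≤ Cf := Finset.sum_nonneg (fun k _ => by positivity)
  refine ⟨max (max C₂ (2*C₀)) Cf, ?_, ?_⟩
  · exact lt_of_lt_of_le hC₂pos (le_trans (le_max_left _ _) (le_max_left _ _))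
  · intro n hn1
    have hnpos : (0:ℝ) < n := by exact_mod_cast hn1
    rcases lt_or_ge n N with h | h
    · refine le_trans (hCfn n hn1 h) ?_
      gcongr
      exact le_max_right _ _
    · rw [abs_le]
      constructor
      · refine le_trans ?_ (hlow n h)
        have h1 : (2*C₀)/(n:ℝ) ≤ (max (max C₂ (2*C₀)) Cf)/(n:ℝ) := by
          gcongr
          exact le_trans (le_max_right _ _) (le_max_left _ _)
        rw [neg_div]
        exact neg_le_neg h1
      · refine le_trans (hup n h) ?_
        gcongr
        exact le_trans (le_max_left _ _) (le_max_left _ _)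
end

section
/- Let $U$ be a unitary operator on a Hilbert space and $\omega \in \mathbb{D}$, and set $F(\omega) = (U+\omega)(U-\omega)^{-1}$, $G(\omega) = (U-\omega)^{-1}$. Then for any unit vector $e_j$, $\sum_k |\langle e_k, G(\omega) e_j\rangle|^2 = \|G(\omega)e_j\|^2 = \frac{1}{1-|\omega|^2} \mathrm{Re}\,\langle e_j, F(\omega) e_j \rangle$. -/
/-!
Parseval gives the first identity. For the second, put `x = G(ω) e`, so that `e = (U - ω) x`;
then `Re ⟨(U - ω) x, (U + ω) x⟩ = ‖U x‖² - |ω|² ‖x‖²` because the cross terms are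
purely imaginary, and `‖U x‖ = ‖x‖`.
-/

open scoped InnerProductSpace

theorem HilbertBasis.tsum_norm_inner_sq {ι 𝕜 E : Type*} [RCLike 𝕜] [NormedAddCommGroup E]
    [InnerProductSpace 𝕜 E] (b : HilbertBasis ι 𝕜 E) (x : E) :
    ∑' i, ‖⟪b i, x⟫_𝕜‖ ^ 2 = ‖x‖ ^ 2 := by
  have h := (b.hasSum_inner_mul_inner x x).mapL RCLike.reCLM
  have hterm (i : ι) : ⟪x, b i⟫_𝕜 * ⟪b i, x⟫_𝕜 = (‖⟪b i, x⟫_𝕜‖ ^ 2 : ℝ) := by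
    rw [← inner_conj_symm x, RCLike.conj_mul]
    norm_cast
  simp only [RCLike.reCLM_apply, hterm, RCLike.ofReal_re, inner_self_eq_norm_sq] at h
  exact h.tsum_eq

theorem re_inner_sub_add_eq_norm_sq_sub_norm_sq {𝕜 E : Type*} [RCLike 𝕜] [NormedAddCommGroup E]
    [InnerProductSpace 𝕜 E] (u v : E) :
    RCLike.re ⟪u - v, u + v⟫_𝕜 = ‖u‖ ^ 2 - ‖v‖ ^ 2 := by
  simp only [inner_sub_left, inner_add_right, map_add, map_sub, inner_re_symm v u,
    inner_self_eq_norm_sq]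
  ring

theorem stmt_18_general {H : Type*} [NormedAddCommGroup H] [InnerProductSpace ℂ H]
    {ι : Type*} (b : HilbertBasis ι ℂ H)
    (U R : H →L[ℂ] H) (hU : ∀ x, ‖U x‖ = ‖x‖)
    (ω : ℂ) (hω : ‖ω‖ < 1)
    (h1 : (U - ω • ContinuousLinearMap.id ℂ H) ∘L R = ContinuousLinearMap.id ℂ H)
    (e : H) :
    (∑' i : ι, ‖(inner ℂ (b i) (R e) : ℂ)‖ ^ 2 = ‖R e‖ ^ 2) ∧
    ‖R e‖ ^ 2 = (1 / (1 - ‖ω‖ ^ 2)) *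
      ((inner ℂ e (((U + ω • ContinuousLinearMap.id ℂ H) ∘L R) e) : ℂ)).re := by
  refine ⟨b.tsum_norm_inner_sq (R e), ?_⟩
  set x := R e
  have hex : U x - ω • x = e := by simpa using DFunLike.congr_fun h1 e
  have hre : (inner ℂ e (((U + ω • ContinuousLinearMap.id ℂ H) ∘L R) e) : ℂ).re
      = (1 - ‖ω‖ ^ 2) * ‖x‖ ^ 2 := by
    calc (inner ℂ e (((U + ω • ContinuousLinearMap.id ℂ H) ∘L R) e) : ℂ).re
        = RCLike.re ⟪U x - ω • x, U x + ω • x⟫_ℂ := by rw [hex]; rfl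
      _ = (1 - ‖ω‖ ^ 2) * ‖x‖ ^ 2 := by
        rw [re_inner_sub_add_eq_norm_sq_sub_norm_sq, hU, norm_smul]
        ring
  have hpos : 0 < 1 - ‖ω‖ ^ 2 := sub_pos.2 (pow_lt_one₀ (norm_nonneg ω) hω two_ne_zero)
  rw [hre]
  field_simp

/-- For a unitary `U` on a Hilbert space, `ω ∈ 𝔻`, `G(ω) = (U-ω)⁻¹` and
`F(ω) = (U+ω)(U-ω)⁻¹`, and a unit vector `e`:
`∑_i |⟨b_i, G(ω)e⟩|² = ‖G(ω)e‖² = (1/(1-|ω|²)) Re⟨e, F(ω)e⟩`. -/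
theorem stmt_18 {H : Type*} [NormedAddCommGroup H] [InnerProductSpace ℂ H]
    [CompleteSpace H] {ι : Type*} (b : HilbertBasis ι ℂ H)
    (U R : H →L[ℂ] H) (hU : ∀ x, ‖U x‖ = ‖x‖) (hUs : Function.Surjective U)
    (ω : ℂ) (hω : ‖ω‖ < 1)
    (h1 : (U - ω • ContinuousLinearMap.id ℂ H) ∘L R = ContinuousLinearMap.id ℂ H)
    (h2 : R ∘L (U - ω • ContinuousLinearMap.id ℂ H) = ContinuousLinearMap.id ℂ H)
    (e : H) (he : ‖e‖ = 1) :
    (∑' i : ι, ‖(inner ℂ (b i) (R e) : ℂ)‖ ^ 2 = ‖R e‖ ^ 2) ∧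
    ‖R e‖ ^ 2 = (1 / (1 - ‖ω‖ ^ 2)) *
      ((inner ℂ e (((U + ω • ContinuousLinearMap.id ℂ H) ∘L R) e) : ℂ)).re :=
  stmt_18_general b U R hU ω hω h1 e
end
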